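/- Let n ≥ 2 and 1 ≤ p < n, and define 𝒫_p^{largest} = {A ∈ Sym²(ℝⁿ) : A + ((p−1)/(n−p))·tr(A)·I ≥ 0}. Then: (i) 𝒫_p^{largest} is a closed convex cone subequation, invariant under the O(n)-action A ↦ gᵀAg, with Riesz characteristic p (i.e. P_{e⊥} − (p−1)P_e ∈ ∂𝒫_p^{largest} for every unit vector e); and (ii) every O(n)-invariant convex cone subequation F ⊆ Sym²(ℝⁿ) with Riesz characteristic p satisfies F ⊆ 𝒫_p^{largest}. -/

import Mathlib

open Set Filter Topology Matrix

noncomputable section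

abbrev EucSp (n : ℕ) := EuclideanSpace ℝ (Fin n)

/-- The rank-one orthogonal projection matrix `P_e = e eᵀ` associated to a vector `e`. -/
def projMat {n : ℕ} (e : EucSp n) : Matrix (Fin n) (Fin n) ℝ :=
  Matrix.of fun i j => e i * e j

/-- A (pure second-order, constant coefficient) subequation: a closed set of symmetric
matrices satisfying positivity `F + 𝒫 ⊆ F`. -/
def IsSubequation {n : ℕ} (F : Set (Matrix (Fin n) (Fin n) ℝ)) : Prop :=
  (∀ A ∈ F, A.IsSymm) ∧ IsClosed F ∧
    ∀ A ∈ F, ∀ P : Matrix (Fin n) (Fin n) ℝ, P.PosSemidef → A + P ∈ F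

/-- A cone subequation. -/
def IsConeSubequation {n : ℕ} (F : Set (Matrix (Fin n) (Fin n) ℝ)) : Prop :=
  IsSubequation F ∧ ∀ A ∈ F, ∀ t : ℝ, 0 ≤ t → t • A ∈ F

/-- `F` is invariant under a closed subgroup of `O(n)` acting transitively on the
unit sphere. -/
def STInvariant {n : ℕ} (F : Set (Matrix (Fin n) (Fin n) ℝ)) : Prop :=
  ∃ G : Set (Matrix (Fin n) (Fin n) ℝ),
    IsClosed G ∧
    G ⊆ (Matrix.orthogonalGroup (Fin n) ℝ : Set (Matrix (Fin n) (Fin n) ℝ)) ∧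
    (1 : Matrix (Fin n) (Fin n) ℝ) ∈ G ∧
    (∀ g ∈ G, ∀ h ∈ G, g * h ∈ G) ∧
    (∀ g ∈ G, g⁻¹ ∈ G) ∧
    (∀ x y : EucSp n, ‖x‖ = 1 → ‖y‖ = 1 → ∃ g ∈ G, Matrix.toEuclideanLin g x = y) ∧
    (∀ g ∈ G, ∀ A ∈ F, gᵀ * A * g ∈ F)

/-- The interior of `F` relative to the subspace `Sym²(ℝⁿ)` of symmetric matrices. -/
def symInterior {n : ℕ} (F : Set (Matrix (Fin n) (Fin n) ℝ)) :
    Set (Matrix (Fin n) (Fin n) ℝ) :=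
  {A | ∃ U ∈ 𝓝 A, ∀ B ∈ U, B.IsSymm → B ∈ F}

/-- The frontier of `F` relative to the subspace `Sym²(ℝⁿ)` of symmetric matrices. -/
def symFrontier {n : ℕ} (F : Set (Matrix (Fin n) (Fin n) ℝ)) :
    Set (Matrix (Fin n) (Fin n) ℝ) :=
  closure F \ symInterior F

/-- `F` has finite (increasing) Riesz characteristic `p`:
`P_{e⊥} − (p−1) P_e ∈ ∂F` for every unit vector `e`. -/
def HasRieszChar {n : ℕ} (F : Set (Matrix (Fin n) (Fin n) ℝ)) (p : ℝ) : Prop :=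
  1 ≤ p ∧ ∀ e : EucSp n, ‖e‖ = 1 →
    ((1 : Matrix (Fin n) (Fin n) ℝ) - projMat e) - (p - 1) • projMat e ∈ symFrontier F

/-- `F` has finite decreasing Riesz characteristic `q`:
`−P_{e⊥} + (q−1) P_e ∈ ∂F` for every unit vector `e`. -/
def HasDualRieszChar {n : ℕ} (F : Set (Matrix (Fin n) (Fin n) ℝ)) (q : ℝ) : Prop :=
  1 ≤ q ∧ ∀ e : EucSp n, ‖e‖ = 1 →
    -((1 : Matrix (Fin n) (Fin n) ℝ) - projMat e) + (q - 1) • projMat e ∈ symFrontier F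

/-- The Hessian matrix of a function `φ : ℝⁿ → ℝ` at `x`. -/
def hess {n : ℕ} (φ : EucSp n → ℝ) (x : EucSp n) : Matrix (Fin n) (Fin n) ℝ :=
  Matrix.of fun i j =>
    iteratedFDeriv ℝ 2 φ x ![EuclideanSpace.single i (1 : ℝ), EuclideanSpace.single j (1 : ℝ)]

/-- `u` is `F`-subharmonic (a viscosity subsolution) on `X`. -/
def IsFSubharmonicOn {n : ℕ} (F : Set (Matrix (Fin n) (Fin n) ℝ))
    (X : Set (EucSp n)) (u : EucSp n → EReal) : Prop :=
  UpperSemicontinuousOn u X ∧ (∀ x ∈ X, u x < ⊤) ∧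
    ∀ x₀ ∈ X, ∀ φ : EucSp n → ℝ, ContDiffAt ℝ 2 φ x₀ →
      (∀ᶠ x in 𝓝[X] x₀, u x ≤ ((φ x : ℝ) : EReal)) → u x₀ = ((φ x₀ : ℝ) : EReal) →
      hess φ x₀ ∈ F

/-- The dual subequation `F̃ = {A : −A ∉ Int F}` (interior relative to `Sym²(ℝⁿ)`). -/
def dualSubeq {n : ℕ} (F : Set (Matrix (Fin n) (Fin n) ℝ)) :
    Set (Matrix (Fin n) (Fin n) ℝ) :=
  {A | A.IsSymm ∧ -A ∉ symInterior F}

/-- `u` is `F`-harmonic on `X`: `u` is `F`-subharmonic and `−u` is `F̃`-subharmonic. -/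
def IsFHarmonicOn {n : ℕ} (F : Set (Matrix (Fin n) (Fin n) ℝ))
    (X : Set (EucSp n)) (u : EucSp n → ℝ) : Prop :=
  IsFSubharmonicOn F X (fun x => ((u x : ℝ) : EReal)) ∧
  IsFSubharmonicOn (dualSubeq F) X (fun x => ((-(u x) : ℝ) : EReal))

/-- The Riesz kernel `K_p`. -/
def rieszKernel (p t : ℝ) : ℝ :=
  if p < 2 then t ^ (2 - p) else if p = 2 then Real.log t else -(t ^ (2 - p))

/-- `𝒫_p^{largest} = {A : A + ((p−1)/(n−p))·tr(A)·I ≥ 0}`. -/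
def Plargest (n : ℕ) (p : ℝ) : Set (Matrix (Fin n) (Fin n) ℝ) :=
  {A | A.IsSymm ∧
    (A + (((p - 1) / ((n : ℝ) - p)) * A.trace) • (1 : Matrix (Fin n) (Fin n) ℝ)).PosSemidef}

/-!
The map `A ↦ A + c·tr(A)·I`, `c = (p - 1)/(n - p)`, is linear and commutes with orthogonal
conjugation, and `𝒫_p^{largest}` is the preimage of the positive semidefinite cone under it; this
gives the closed convex invariant cone. It sends `P_{e⊥} - (p - 1) P_e` to `p P_{e⊥}`, which is
semidefinite but has a kernel, so the Riesz matrix lies on the boundary.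

For maximality, conjugate `A ∈ F` to the diagonal matrix of its eigenvalues `d` and average over
the cyclic permutations of the indices other than `i`: this puts
`(n - 1) dᵢ P_i + (∑ d - dᵢ) P_{i⊥}` in `F`. If `a P_e + b P_{e⊥} ∈ F` with `a + (p - 1) b < 0`,
a positive combination of it with `P_{e⊥} - (p - 1) P_e` equals `P_{e⊥} - (p - 1) P_e - ε I`,
which would put the Riesz matrix in the interior of `F`. Hence
`(n - 1) dᵢ + (p - 1)(∑ d - dᵢ) ≥ 0`, i.e. `dᵢ + c ∑ d ≥ 0` for every `i`, which is
`A ∈ 𝒫_p^{largest}`.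
-/

variable {n : ℕ}

def rieszMatrix (p : ℝ) (e : EucSp n) : Matrix (Fin n) (Fin n) ℝ :=
  (1 - projMat e) - (p - 1) • projMat e

section Projection

variable {e : EucSp n}

lemma projMat_eq_vecMulVec (e : EucSp n) : projMat e = vecMulVec e e := rfl

lemma isSymm_projMat (e : EucSp n) : (projMat e).IsSymm :=
  Matrix.IsSymm.ext fun i j => mul_comm (e j) (e i)

lemma isSymm_rieszMatrix (p : ℝ) (e : EucSp n) : (rieszMatrix p e).IsSymm :=
  (isSymm_one.sub (isSymm_projMat e)).sub ((isSymm_projMat e).smul _)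

lemma dotProduct_self_of_norm_eq_one (he : ‖e‖ = 1) : (e : Fin n → ℝ) ⬝ᵥ e = 1 := by
  rw [← one_pow 2, ← he, EuclideanSpace.norm_sq_eq]
  simp [dotProduct, sq]

lemma trace_projMat (he : ‖e‖ = 1) : (projMat e).trace = 1 :=
  (trace_vecMulVec _ _).trans (dotProduct_self_of_norm_eq_one he)

lemma projMat_mul_self (he : ‖e‖ = 1) : projMat e * projMat e = projMat e := by
  rw [projMat_eq_vecMulVec, vecMulVec_mul_vecMulVec, dotProduct_self_of_norm_eq_one he, one_smul]

lemma posSemidef_one_sub_projMat (he : ‖e‖ = 1) : (1 - projMat e).PosSemidef := by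
  have hidem : (1 - projMat e)ᴴ * (1 - projMat e) = 1 - projMat e := by
    rw [conjTranspose_eq_transpose_of_trivial, transpose_sub, transpose_one,
      (isSymm_projMat e).eq, sub_mul, mul_sub, mul_sub, projMat_mul_self he]
    simp
  exact hidem ▸ posSemidef_conjTranspose_mul_self (1 - projMat e)

lemma diagonal_ite_eq_smul_projMat_single (i : Fin n) (a b : ℝ) :
    diagonal (fun j => if j = i then a else b) =
      a • projMat (EuclideanSpace.single i 1) + b • (1 - projMat (EuclideanSpace.single i 1)) := by
  ext j l
  rcases eq_or_ne j l with rfl | hjl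
  · by_cases hji : j = i <;> simp [projMat, hji]
  · by_cases hli : l = i
    · subst hli
      simp [projMat, hjl, one_apply_ne hjl]
    · simp [projMat, hjl, hli]

end Projection

lemma isClosed_setOf_posSemidef {ι : Type*} [Fintype ι] :
    IsClosed {M : Matrix ι ι ℝ | M.PosSemidef} := by
  simp only [posSemidef_iff_dotProduct_mulVec, Set.ofPred_and, Set.ofPred_forall]
  exact (isClosed_eq continuous_id.matrix_conjTranspose continuous_id).inter <|
    isClosed_iInter fun x => isClosed_le continuous_const <|
      continuous_const.dotProduct (continuous_id.matrix_mulVec continuous_const)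

lemma posSemidef_add_smul_one_of_norm_le {M : Matrix (Fin n) (Fin n) ℝ} (hM : M.IsSymm) {ε : ℝ}
    (h : ‖toEuclideanCLM (n := Fin n) (𝕜 := ℝ) M‖ ≤ ε) : (M + ε • 1).PosSemidef := by
  refine .of_dotProduct_mulVec_nonneg (isHermitian_iff_isSymm.2 (hM.add (isSymm_one.smul ε)))
    fun x => ?_
  set y : EucSp n := WithLp.toLp 2 x
  have hquad : |x ⬝ᵥ (M *ᵥ x)| ≤ ε * ‖y‖ ^ 2 := by
    rw [← inner_toEuclideanCLM]
    calc |inner ℝ y (toEuclideanCLM (n := Fin n) (𝕜 := ℝ) M y)|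
        ≤ ‖y‖ * ‖toEuclideanCLM (n := Fin n) (𝕜 := ℝ) M y‖ := abs_real_inner_le_norm _ _
      _ ≤ ‖y‖ * (ε * ‖y‖) := by
        gcongr
        exact (ContinuousLinearMap.le_opNorm _ _).trans (by gcongr)
      _ = ε * ‖y‖ ^ 2 := by ring
  have hnorm : x ⬝ᵥ x = ‖y‖ ^ 2 := by
    rw [← real_inner_self_eq_norm_sq, EuclideanSpace.inner_toLp_toLp, star_trivial]
  simp only [star_trivial, add_mulVec, smul_mulVec, one_mulVec, dotProduct_add, dotProduct_smul,
    smul_eq_mul, hnorm]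
  linarith [neg_abs_le (x ⬝ᵥ (M *ᵥ x))]

section SymInterior

variable {F : Set (Matrix (Fin n) (Fin n) ℝ)} {A : Matrix (Fin n) (Fin n) ℝ}

lemma mem_symInterior_iff : A ∈ symInterior F ↔ ∀ᶠ B in 𝓝 A, B.IsSymm → B ∈ F :=
  Filter.eventually_iff_exists_mem.symm

lemma notMem_symInterior_of_frequently (h : ∃ᶠ B in 𝓝 A, B.IsSymm ∧ B ∉ F) :
    A ∉ symInterior F := by
  rw [mem_symInterior_iff]
  simpa [Filter.not_eventually] using h

lemma mem_symInterior_of_sub_smul_one_mem (hF : IsSubequation F) {ε : ℝ} (hε : 0 < ε)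
    (hA : A - ε • 1 ∈ F) : A ∈ symInterior F := by
  have hAsymm : A.IsSymm := by simpa using (hF.1 _ hA).add (isSymm_one.smul ε)
  have hT : Continuous (toEuclideanCLM (n := Fin n) (𝕜 := ℝ)) := by
    exact LinearMap.continuous_of_finiteDimensional
      (toEuclideanCLM (n := Fin n) (𝕜 := ℝ)).toAlgEquiv.toLinearMap
  have hcont : Continuous fun B => ‖toEuclideanCLM (n := Fin n) (𝕜 := ℝ) (B - A)‖ := by
    fun_prop
  rw [mem_symInterior_iff]
  filter_upwards [hcont.continuousAt.eventually_lt continuousAt_const (by simpa using hε)]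
    with B hB hBsymm
  have := hF.2.2 _ hA _ (posSemidef_add_smul_one_of_norm_le (hBsymm.sub hAsymm) hB.le)
  rwa [sub_add_add_cancel, add_sub_cancel] at this

end SymInterior

section TraceShift

variable (c : ℝ)

def traceShift : Matrix (Fin n) (Fin n) ℝ →ₗ[ℝ] Matrix (Fin n) (Fin n) ℝ where
  toFun A := A + (c * A.trace) • 1
  map_add' A B := by simp only [trace_add]; module
  map_smul' t A := by simp only [trace_smul, smul_eq_mul, RingHom.id_apply]; module

variable {c}

lemma traceShift_apply (A : Matrix (Fin n) (Fin n) ℝ) :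
    traceShift c A = A + (c * A.trace) • 1 :=
  rfl

lemma posSemidef_traceShift (hc : 0 ≤ c) {P : Matrix (Fin n) (Fin n) ℝ} (hP : P.PosSemidef) :
    (traceShift c P).PosSemidef :=
  hP.add (PosSemidef.one.smul (mul_nonneg hc hP.trace_nonneg))

lemma traceShift_conj {g : Matrix (Fin n) (Fin n) ℝ} (hg : g ∈ orthogonalGroup (Fin n) ℝ)
    (A : Matrix (Fin n) (Fin n) ℝ) : traceShift c (gᵀ * A * g) = gᵀ * traceShift c A * g := by
  rw [traceShift_apply, traceShift_apply, trace_mul_cycle, (mem_orthogonalGroup_iff _ _).1 hg,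
    one_mul, Matrix.mul_add, Matrix.add_mul, Matrix.mul_smul, Matrix.smul_mul, Matrix.mul_one,
    (mem_orthogonalGroup_iff' _ _).1 hg]

lemma star_eigenvectorUnitary_mul_mul {A : Matrix (Fin n) (Fin n) ℝ} (hA : A.IsHermitian) :
    star (hA.eigenvectorUnitary : Matrix (Fin n) (Fin n) ℝ) * A * hA.eigenvectorUnitary =
      diagonal hA.eigenvalues := by
  simpa using hA.conjStarAlgAut_star_eigenvectorUnitary

lemma posSemidef_traceShift_of_eigenvalues {A : Matrix (Fin n) (Fin n) ℝ} (hA : A.IsHermitian)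
    (h : ∀ i, 0 ≤ hA.eigenvalues i + c * ∑ j, hA.eigenvalues j) :
    (traceShift c A).PosSemidef := by
  set U := (hA.eigenvectorUnitary : Matrix (Fin n) (Fin n) ℝ)
  have hUU : U * star U = 1 := Unitary.mul_star_self_of_mem hA.eigenvectorUnitary.2
  have hspec : A = U * diagonal hA.eigenvalues * star U := by
    simpa using hA.spectral_theorem
  have htr : A.trace = ∑ j, hA.eigenvalues j := by simpa using hA.trace_eq_sum_eigenvalues
  have hdiag : diagonal (fun i => hA.eigenvalues i + c * ∑ j, hA.eigenvalues j) =
      diagonal hA.eigenvalues + (c * ∑ j, hA.eigenvalues j) • 1 := by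
    ext i j
    rcases eq_or_ne i j with rfl | hij <;> simp [*]
  have hshift : traceShift c A =
      U * diagonal (fun i => hA.eigenvalues i + c * ∑ j, hA.eigenvalues j) * star U := by
    rw [traceShift_apply, htr, hdiag, Matrix.mul_add, Matrix.add_mul, Matrix.mul_smul,
      Matrix.smul_mul, Matrix.mul_one, hUU, ← hspec]
  exact hshift ▸ (posSemidef_diagonal_iff.2 h).mul_mul_conjTranspose_same U

end TraceShift

section Plargest

variable {p : ℝ}

lemma mem_plargest_iff {A : Matrix (Fin n) (Fin n) ℝ} :
    A ∈ Plargest n p ↔ A.IsSymm ∧ (traceShift ((p - 1) / (n - p)) A).PosSemidef :=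
  Iff.rfl

lemma isClosed_plargest : IsClosed (Plargest n p) :=
  (isClosed_eq continuous_id.matrix_transpose continuous_id).inter <|
    isClosed_setOf_posSemidef.preimage (LinearMap.continuous_of_finiteDimensional
      (traceShift ((p - 1) / (n - p))))

lemma isConeSubequation_plargest (hp1 : 1 ≤ p) (hpn : p < n) :
    IsConeSubequation (Plargest n p) := by
  simp only [IsConeSubequation, IsSubequation, mem_plargest_iff]
  refine ⟨⟨fun A hA => hA.1, isClosed_plargest, fun A hA P hP => ⟨?_, ?_⟩⟩,
    fun A hA t ht => ⟨?_, ?_⟩⟩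
  · exact hA.1.add (isHermitian_iff_isSymm.1 hP.1)
  · rw [map_add]
    exact hA.2.add (posSemidef_traceShift (div_nonneg (by linarith) (by linarith)) hP)
  · exact hA.1.smul t
  · rw [map_smul]
    exact hA.2.smul ht

lemma convex_plargest : Convex ℝ (Plargest n p) := by
  intro A hA B hB a b ha hb _
  refine mem_plargest_iff.2 ⟨(hA.1.smul a).add (hB.1.smul b), ?_⟩
  rw [map_add, map_smul, map_smul]
  exact (hA.2.smul ha).add (hB.2.smul hb)

lemma conj_mem_plargest {g A : Matrix (Fin n) (Fin n) ℝ} (hg : g ∈ orthogonalGroup (Fin n) ℝ)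
    (hA : A ∈ Plargest n p) : gᵀ * A * g ∈ Plargest n p := by
  refine mem_plargest_iff.2 ⟨?_, ?_⟩
  · rw [IsSymm, transpose_mul, transpose_mul, transpose_transpose, hA.1.eq, Matrix.mul_assoc]
  · rw [traceShift_conj hg, ← conjTranspose_eq_transpose_of_trivial]
    exact hA.2.conjTranspose_mul_mul_same g

variable {e : EucSp n}

lemma traceShift_rieszMatrix_sub_smul (he : ‖e‖ = 1) (hpn : p < n) (t : ℝ) :
    traceShift ((p - 1) / (n - p)) (rieszMatrix p e - t • projMat e) =
      p • (1 - projMat e) - t • (projMat e + ((p - 1) / (n - p)) • 1) := by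
  have hc : (p - 1) / (n - p) * (n - p) = p - 1 := div_mul_cancel₀ _ (by linarith)
  rw [traceShift_apply, rieszMatrix]
  simp only [trace_sub, trace_smul, trace_one, trace_projMat he, Fintype.card_fin, smul_eq_mul]
  linear_combination (norm := module) hc • (1 : Matrix (Fin n) (Fin n) ℝ)

lemma rieszMatrix_mem_plargest (he : ‖e‖ = 1) (hp1 : 1 ≤ p) (hpn : p < n) :
    rieszMatrix p e ∈ Plargest n p := by
  refine mem_plargest_iff.2 ⟨isSymm_rieszMatrix p e, ?_⟩
  have h := traceShift_rieszMatrix_sub_smul he hpn 0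
  rw [zero_smul, sub_zero, zero_smul, sub_zero] at h
  exact h ▸ (posSemidef_one_sub_projMat he).smul (by linarith)

lemma rieszMatrix_sub_smul_notMem_plargest (he : ‖e‖ = 1) (hp1 : 1 ≤ p) (hpn : p < n) {t : ℝ}
    (ht : 0 < t) : rieszMatrix p e - t • projMat e ∉ Plargest n p := by
  intro h
  have hc : 0 ≤ (p - 1) / (n - p) := div_nonneg (by linarith) (by linarith)
  have hcompress := (mem_plargest_iff.1 h).2.conjTranspose_mul_mul_same (projMat e)
  have hP : projMat e * (p • (1 - projMat e) - t • (projMat e + ((p - 1) / (n - p)) • 1)) *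
      projMat e = (-(t * (1 + (p - 1) / (n - p)))) • projMat e := by
    simp only [Matrix.mul_sub, Matrix.sub_mul, Matrix.mul_add, Matrix.add_mul, Matrix.mul_smul,
      Matrix.smul_mul, Matrix.mul_one, projMat_mul_self he]
    module
  rw [traceShift_rieszMatrix_sub_smul he hpn, conjTranspose_eq_transpose_of_trivial,
    (isSymm_projMat e).eq, hP] at hcompress
  have htrace := hcompress.trace_nonneg
  rw [trace_smul, trace_projMat he, smul_eq_mul, mul_one] at htrace
  linarith [mul_pos ht (by linarith : (0 : ℝ) < 1 + (p - 1) / (n - p))]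

lemma rieszMatrix_notMem_symInterior_plargest (he : ‖e‖ = 1) (hp1 : 1 ≤ p) (hpn : p < n) :
    rieszMatrix p e ∉ symInterior (Plargest n p) := by
  have hlim : Tendsto (fun t : ℝ => rieszMatrix p e - t • projMat e) (𝓝[>] 0)
      (𝓝 (rieszMatrix p e)) := by
    have hcont : Continuous fun t : ℝ => rieszMatrix p e - t • projMat e := by fun_prop
    simpa using (hcont.tendsto 0).mono_left nhdsWithin_le_nhds
  refine notMem_symInterior_of_frequently (hlim.frequently (Filter.Eventually.frequently ?_))
  exact eventually_nhdsWithin_of_forall fun t ht =>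
    ⟨(isSymm_rieszMatrix p e).sub ((isSymm_projMat e).smul t),
      rieszMatrix_sub_smul_notMem_plargest he hp1 hpn ht⟩

lemma hasRieszChar_plargest (hp1 : 1 ≤ p) (hpn : p < n) : HasRieszChar (Plargest n p) p :=
  ⟨hp1, fun _ he => ⟨subset_closure (rieszMatrix_mem_plargest he hp1 hpn),
    rieszMatrix_notMem_symInterior_plargest he hp1 hpn⟩⟩

end Plargest

lemma add_mem_of_convex {E : Type*} [AddCommGroup E] [Module ℝ E] {F : Set E}
    (hcone : ∀ A ∈ F, ∀ t : ℝ, 0 ≤ t → t • A ∈ F) (hconv : Convex ℝ F) {A B : E} (hA : A ∈ F)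
    (hB : B ∈ F) : A + B ∈ F := by
  convert hcone _ (hconv hA hB (by norm_num : (0 : ℝ) ≤ 1 / 2) (by norm_num : (0 : ℝ) ≤ 1 / 2)
    (by norm_num)) 2 (by norm_num) using 1
  module

section Permutation

variable {ι : Type*} [Fintype ι] [DecidableEq ι]

lemma permMatrix_mem_orthogonalGroup (σ : Equiv.Perm ι) :
    σ.permMatrix ℝ ∈ orthogonalGroup ι ℝ := by
  rw [mem_orthogonalGroup_iff, transpose_permMatrix, ← permMatrix_mul, inv_mul_cancel,
    permMatrix_one]

lemma transpose_permMatrix_mul_diagonal_mul (σ : Equiv.Perm ι) (d : ι → ℝ) :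
    (σ.permMatrix ℝ)ᵀ * diagonal d * σ.permMatrix ℝ = diagonal (d ∘ ⇑σ⁻¹) := by
  rw [transpose_permMatrix, PEquiv.toMatrix_toPEquiv_mul, PEquiv.mul_toMatrix_toPEquiv,
    submatrix_submatrix]
  exact submatrix_diagonal_equiv d σ⁻¹

lemma diagonal_comp_perm_mem {F : Set (Matrix ι ι ℝ)}
    (hinv : ∀ g ∈ orthogonalGroup ι ℝ, ∀ A ∈ F, gᵀ * A * g ∈ F) {d : ι → ℝ}
    (hd : diagonal d ∈ F) (σ : Equiv.Perm ι) : diagonal (d ∘ σ) ∈ F := by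
  have h := hinv _ (permMatrix_mem_orthogonalGroup σ⁻¹) _ hd
  rwa [transpose_permMatrix_mul_diagonal_mul, inv_inv] at h

end Permutation

section Averaging

variable {m : ℕ} [NeZero m]

lemma sum_apply_extendDomain_addRight (d : Fin (m + 1) → ℝ) (i j : Fin (m + 1)) :
    ∑ k : Fin m, d ((Equiv.addRight k).extendDomain (finSuccAboveEquiv i) j) =
      if j = i then m * d i else ∑ l, d l - d i := by
  split_ifs with hji
  · subst hji
    simp [Equiv.Perm.extendDomain_apply_not_subtype]
  · obtain ⟨j, rfl⟩ := Fin.exists_succAbove_eq hji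
    have himage : ∀ k : Fin m,
        (Equiv.addRight k).extendDomain (finSuccAboveEquiv i) (i.succAbove j) =
          i.succAbove (j + k) := fun k =>
      Equiv.Perm.extendDomain_apply_image (Equiv.addRight k) (finSuccAboveEquiv i) j
    have hshift : ∑ k, d (i.succAbove (j + k)) = ∑ k, d (i.succAbove k) :=
      Equiv.sum_comp (Equiv.addLeft j) (fun k => d (i.succAbove k))
    rw [Fintype.sum_congr _ _ fun k => congrArg d (himage k), hshift, Fin.sum_univ_succAbove d i]
    ring

lemma diagonal_average_mem {F : Set (Matrix (Fin (m + 1)) (Fin (m + 1)) ℝ)}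
    (hcone : ∀ A ∈ F, ∀ t : ℝ, 0 ≤ t → t • A ∈ F) (hconv : Convex ℝ F)
    (hinv : ∀ g ∈ orthogonalGroup (Fin (m + 1)) ℝ, ∀ A ∈ F, gᵀ * A * g ∈ F)
    {d : Fin (m + 1) → ℝ} (hd : diagonal d ∈ F) (i : Fin (m + 1)) :
    diagonal (fun j => if j = i then m * d i else ∑ l, d l - d i) ∈ F := by
  set σ : Fin m → Equiv.Perm (Fin (m + 1)) :=
    fun k => (Equiv.addRight k).extendDomain (finSuccAboveEquiv i)
  have hsum : diagonal (fun j => ∑ k, d (σ k j)) = ∑ k, diagonal (d ∘ σ k) := by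
    ext j l
    by_cases hjl : j = l <;> simp [Matrix.sum_apply, hjl]
  simp_rw [← sum_apply_extendDomain_addRight d i]
  rw [hsum]
  exact Finset.sum_induction _ (· ∈ F) (fun _ _ => add_mem_of_convex hcone hconv)
    (by simpa using hcone _ hd 0 le_rfl) fun k _ => diagonal_comp_perm_mem hinv hd _

end Averaging

lemma le_of_smul_projMat_add_smul_mem {p : ℝ} {F : Set (Matrix (Fin n) (Fin n) ℝ)}
    (hF : IsConeSubequation F) (hconv : Convex ℝ F) (hR : HasRieszChar F p) {e : EucSp n}
    (he : ‖e‖ = 1) {a b : ℝ} (hab : a • projMat e + b • (1 - projMat e) ∈ F) :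
    0 ≤ a + (p - 1) * b := by
  by_contra! hneg
  have hp : 0 < p := by linarith [hR.1]
  obtain ⟨t, ht, htp⟩ := exists_pos_mul_lt hp (b - a)
  have hfront : rieszMatrix p e ∈ symFrontier F := hR.2 e he
  have hE : rieszMatrix p e ∈ F := hF.1.2.1.closure_eq ▸ hfront.1
  have hε : 0 < -(t * (a + (p - 1) * b)) / p :=
    div_pos (neg_pos.2 (mul_neg_of_pos_of_neg ht hneg)) hp
  have hcoeff : 0 ≤ 1 + t * (a - b) / p := by
    have : -1 < t * (a - b) / p := by rw [lt_div_iff₀ hp]; linarith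
    linarith
  have hcomb : rieszMatrix p e - (-(t * (a + (p - 1) * b)) / p) • 1 =
      (1 + t * (a - b) / p) • rieszMatrix p e + t • (a • projMat e + b • (1 - projMat e)) := by
    rw [rieszMatrix]
    match_scalars <;> field_simp <;> ring
  have hmem : rieszMatrix p e - (-(t * (a + (p - 1) * b)) / p) • 1 ∈ F :=
    hcomb ▸ add_mem_of_convex hF.2 hconv (hF.2 _ hE _ hcoeff) (hF.2 _ hab _ ht.le)
  exact hfront.2 (mem_symInterior_of_sub_smul_one_mem hF.1 hε hmem)

theorem subset_plargest {m : ℕ} [NeZero m] {p : ℝ} (hpm : p < (m + 1 : ℕ))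
    {F : Set (Matrix (Fin (m + 1)) (Fin (m + 1)) ℝ)} (hF : IsConeSubequation F)
    (hconv : Convex ℝ F) (hinv : ∀ g ∈ orthogonalGroup (Fin (m + 1)) ℝ, ∀ A ∈ F, gᵀ * A * g ∈ F)
    (hR : HasRieszChar F p) : F ⊆ Plargest (m + 1) p := by
  intro A hA
  have hAsymm := hF.1.1 A hA
  have hAh : A.IsHermitian := isHermitian_iff_isSymm.2 hAsymm
  set d := hAh.eigenvalues
  have hd : diagonal d ∈ F := by
    have h := hinv _ hAh.eigenvectorUnitary.2 A hA
    rwa [← conjTranspose_eq_transpose_of_trivial, ← star_eq_conjTranspose,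
      star_eigenvectorUnitary_mul_mul] at h
  have hbound : ∀ i, 0 ≤ d i + (p - 1) / ((m + 1 : ℕ) - p) * ∑ j, d j := fun i => by
    have h := diagonal_average_mem hF.2 hconv hinv hd i
    rw [diagonal_ite_eq_smul_projMat_single] at h
    have hineq := le_of_smul_projMat_add_smul_mem hF hconv hR (by simp) h
    have hmp : (0 : ℝ) < (m + 1 : ℕ) - p := by linarith
    have hrw : d i + (p - 1) / ((m + 1 : ℕ) - p) * ∑ j, d j =
        (m * d i + (p - 1) * (∑ j, d j - d i)) / ((m + 1 : ℕ) - p) := by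
      field_simp
      push_cast
      ring
    exact hrw ▸ div_nonneg hineq hmp.le
  exact mem_plargest_iff.2 ⟨hAsymm, posSemidef_traceShift_of_eigenvalues hAh hbound⟩

theorem stmt14_general (n : ℕ) (p : ℝ) (hp1 : 1 ≤ p) (hpn : p < (n : ℝ)) :
    (IsConeSubequation (Plargest n p) ∧ Convex ℝ (Plargest n p) ∧
      (∀ g ∈ Matrix.orthogonalGroup (Fin n) ℝ, ∀ A ∈ Plargest n p,
        gᵀ * A * g ∈ Plargest n p) ∧
      HasRieszChar (Plargest n p) p) ∧
    (∀ F : Set (Matrix (Fin n) (Fin n) ℝ),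
      IsConeSubequation F → Convex ℝ F →
      (∀ g ∈ Matrix.orthogonalGroup (Fin n) ℝ, ∀ A ∈ F, gᵀ * A * g ∈ F) →
      HasRieszChar F p → F ⊆ Plargest n p) := by
  refine ⟨⟨isConeSubequation_plargest hp1 hpn, convex_plargest,
    fun g hg A hA => conj_mem_plargest hg hA, hasRieszChar_plargest hp1 hpn⟩,
    fun F hF hconv hinv hR => ?_⟩
  have hn : 1 < n := by exact_mod_cast hp1.trans_lt hpn
  obtain ⟨m, rfl⟩ : ∃ m, n = m + 1 := ⟨n - 1, by omega⟩
  have : NeZero m := ⟨by omega⟩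
  exact subset_plargest hpn hF hconv hinv hR

/-- `𝒫_p^{largest}` is an O(n)-invariant convex cone subequation of Riesz characteristic
`p`, and it contains every O(n)-invariant convex cone subequation of Riesz
characteristic `p`. -/
theorem stmt14 (n : ℕ) (hn : 2 ≤ n) (p : ℝ) (hp1 : 1 ≤ p) (hpn : p < (n : ℝ)) :
    (IsConeSubequation (Plargest n p) ∧ Convex ℝ (Plargest n p) ∧
      (∀ g ∈ Matrix.orthogonalGroup (Fin n) ℝ, ∀ A ∈ Plargest n p,
        gᵀ * A * g ∈ Plargest n p) ∧
      HasRieszChar (Plargest n p) p) ∧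
    (∀ F : Set (Matrix (Fin n) (Fin n) ℝ),
      IsConeSubequation F → Convex ℝ F →
      (∀ g ∈ Matrix.orthogonalGroup (Fin n) ℝ, ∀ A ∈ F, gᵀ * A * g ∈ F) →
      HasRieszChar F p → F ⊆ Plargest n p) :=
  stmt14_general n p hp1 hpn

end
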